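/- arXiv:2308.10955 — 6 statements merged into one kernel-verified Lean document; each statement's English description precedes it below -/
import Mathlib

section
/- Let C be a metrizable compact convex subset of a locally convex topological vector space. Suppose that for any two extreme points x₁, x₂ of C, the midpoint (x₁+x₂)/2 lies in the closure of the set of extreme points of C. Then the set of extreme points of C is dense in C. -/
open Set

/-- A closed set stable under midpoints is convex. -/
lemma isClosed_midpoint_convex
    {E : Type*} [AddCommGroup E] [Module ℝ E] [TopologicalSpace E]
    [IsTopologicalAddGroup E] [ContinuousSMul ℝ E]
    {D : Set E} (hD : IsClosed D)
    (hm : ∀ x ∈ D, ∀ y ∈ D, midpoint ℝ x y ∈ D) : Convex ℝ D := by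
  intro x hx y hy a b ha hb hab
  set f : ℝ → E := fun t => x + t • (y - x) with hf
  have hfc : Continuous f := continuous_const.add (continuous_id.smul continuous_const)
  set T : Set ℝ := f ⁻¹' D with hT
  have hTc : IsClosed T := hD.preimage hfc
  have h0 : (0 : ℝ) ∈ T := by simp [hT, hf, hx]
  have h1 : (1 : ℝ) ∈ T := by simp [hT, hf, hy]
  have hmidT : ∀ s ∈ T, ∀ t ∈ T, (s + t) / 2 ∈ T := by
    intro s hs t ht
    have : f ((s + t) / 2) = midpoint ℝ (f s) (f t) := by
      simp only [hf, midpoint_eq_smul_add, invOf_eq_inv]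
      module
    simpa [hT, this] using hm _ hs _ ht
  have hdyadic : ∀ n : ℕ, ∀ k : ℤ, 0 ≤ k → k ≤ 2 ^ n → ((k : ℝ) / 2 ^ n) ∈ T := by
    intro n
    induction n with
    | zero =>
      intro k h0k h1k
      interval_cases k
      · simpa using h0
      · simpa using h1
    | succ n ih =>
      intro k h0k h1k
      rcases Int.even_or_odd k with ⟨j, hj⟩ | ⟨j, hj⟩
      · have hj0 : 0 ≤ j := by omega
        have hj1 : j ≤ 2 ^ n := by
          have : (2 : ℤ) ^ (n + 1) = 2 * 2 ^ n := by ring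
          omega
        have := ih j hj0 hj1
        have heq : ((k : ℝ) / 2 ^ (n + 1)) = (j : ℝ) / 2 ^ n := by
          have : (k : ℝ) = 2 * j := by exact_mod_cast (by omega : k = 2 * j)
          rw [this]; ring
        rwa [heq]
      · have hj0 : 0 ≤ j := by omega
        have hj1 : j + 1 ≤ 2 ^ n := by
          have : (2 : ℤ) ^ (n + 1) = 2 * 2 ^ n := by ring
          omega
        have hA := ih j hj0 (by omega)
        have hB := ih (j + 1) (by omega) hj1
        push_cast at hB
        have := hmidT _ hA _ hB
        have heq : (((j : ℝ) / 2 ^ n) + ((j : ℝ) + 1) / 2 ^ n) / 2 = (k : ℝ) / 2 ^ (n + 1) := by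
          have hk : (k : ℝ) = 2 * j + 1 := by exact_mod_cast hj
          rw [hk]
          field_simp
          ring
        rw [heq] at this
        push_cast at this ⊢
        exact this
  -- b ∈ [0,1] is a limit of dyadics in T, and T is closed
  have hbT : b ∈ T := by
    have hb1 : b ≤ 1 := by linarith
    have hseq : ∀ n : ℕ, ((⌊b * 2 ^ n⌋ : ℝ) / 2 ^ n) ∈ T := by
      intro n
      apply hdyadic
      · exact Int.floor_nonneg.2 (by positivity)
      · have : b * 2 ^ n ≤ (2 : ℝ) ^ n := by
          nlinarith [pow_pos (by norm_num : (0:ℝ) < 2) n]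
        calc ⌊b * 2 ^ n⌋ ≤ ⌊(2 : ℝ) ^ n⌋ := Int.floor_le_floor this
          _ = 2 ^ n := by
              rw [show ((2:ℝ) ^ n) = ((2 ^ n : ℤ) : ℝ) by push_cast; ring, Int.floor_intCast]
    have htend : Filter.Tendsto (fun n : ℕ => ((⌊b * 2 ^ n⌋ : ℝ) / 2 ^ n))
        Filter.atTop (nhds b) := by
      have h2 : Filter.Tendsto (fun n : ℕ => b - 1 / (2:ℝ) ^ n) Filter.atTop (nhds b) := by
        have h3 : Filter.Tendsto (fun n : ℕ => (1/2 : ℝ) ^ n) Filter.atTop (nhds 0) :=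
          tendsto_pow_atTop_nhds_zero_of_lt_one (by norm_num) (by norm_num)
        have := Filter.Tendsto.const_sub b h3
        simpa [div_pow, one_div] using this
      refine tendsto_of_tendsto_of_tendsto_of_le_of_le h2 tendsto_const_nhds ?_ ?_
      · intro n
        have hpos : (0:ℝ) < 2 ^ n := by positivity
        have := Int.sub_one_lt_floor (b * 2 ^ n)
        show b - 1 / 2 ^ n ≤ (⌊b * 2 ^ n⌋ : ℝ) / 2 ^ n
        rw [le_div_iff₀ hpos]
        have h1n : (1 / (2:ℝ) ^ n) * 2 ^ n = 1 := by field_simp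
        nlinarith
      · intro n
        have hpos : (0:ℝ) < 2 ^ n := by positivity
        have := Int.floor_le (b * 2 ^ n)
        show (⌊b * 2 ^ n⌋ : ℝ) / 2 ^ n ≤ b
        rw [div_le_iff₀ hpos]
        nlinarith
    exact hTc.mem_of_tendsto htend (Filter.Eventually.of_forall hseq)
  have : f b = a • x + b • y := by
    have : a = 1 - b := by linarith
    simp only [hf, this]
    module
  rw [← this]
  exact hbT

/-- Let `C` be a metrizable compact convex subset of a locally convex
topological vector space (over `ℝ`). If for any two extreme points `x₁, x₂` of `C` the
midpoint `(x₁ + x₂)/2` lies in the closure of the set of extreme points of `C`, then the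
set of extreme points of `C` is dense in `C`. -/
theorem extremePoints_dense_of_midpoints_in_closure
    {E : Type*} [AddCommGroup E] [Module ℝ E] [TopologicalSpace E]
    [IsTopologicalAddGroup E] [ContinuousSMul ℝ E] [LocallyConvexSpace ℝ E]
    [TopologicalSpace.MetrizableSpace E]
    (C : Set E) (hC : IsCompact C) (hconv : Convex ℝ C) (hne : C.Nonempty)
    (hmid : ∀ x₁ ∈ C.extremePoints ℝ, ∀ x₂ ∈ C.extremePoints ℝ,
      midpoint ℝ x₁ x₂ ∈ closure (C.extremePoints ℝ)) :
    C ⊆ closure (C.extremePoints ℝ) := by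
  letI : MetricSpace E := TopologicalSpace.metrizableSpaceMetric E
  set S := C.extremePoints ℝ with hS
  set D := closure S with hD
  have hDm : ∀ x ∈ D, ∀ y ∈ D, midpoint ℝ x y ∈ D := by
    have hcont : Continuous (fun p : E × E => midpoint ℝ p.1 p.2) := by
      simp only [midpoint_eq_smul_add]
      exact continuous_const.smul (continuous_fst.add continuous_snd)
    have hmaps : Set.MapsTo (fun p : E × E => midpoint ℝ p.1 p.2) (S ×ˢ S) D :=
      fun p hp => hmid p.1 hp.1 p.2 hp.2
    have := hmaps.closure hcont
    rw [closure_prod_eq] at this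
    intro x hx y hy
    have := this (Set.mk_mem_prod hx hy)
    simpa [hD] using closure_minimal (Set.Subset.rfl) isClosed_closure this
  have hDconv : Convex ℝ D := isClosed_midpoint_convex isClosed_closure hDm
  have hkm := closure_convexHull_extremePoints hC hconv
  calc C = closure (convexHull ℝ S) := hkm.symm
    _ ⊆ closure D := closure_mono (convexHull_min subset_closure hDconv)
    _ = D := closure_closure
end

section
/- Let (X,d) be a compact metric space with no isolated points. Then for every ε > 0 there exists a finite partition X = X₁ ∪ … ∪ X_N into pairwise disjoint sets, each of which is an uncountable Gδ set of diameter at most ε. -/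
open Set Metric

/-- In a T1 perfect Baire space, a countable set has dense complement. -/
lemma aux_countable_dense_compl {X : Type*} [TopologicalSpace X] [T1Space X]
    [PerfectSpace X] [BaireSpace X] {s : Set X} (hs : s.Countable) : Dense sᶜ := by
  have hmem : sᶜ ∈ residual X := by
    have h : sᶜ = ⋂ x ∈ s, ({x}ᶜ : Set X) := by
      rw [← Set.compl_iUnion₂, Set.biUnion_of_singleton]
    rw [h]
    exact (countable_bInter_mem hs).mpr fun x _ =>
      residual_of_dense_open isOpen_compl_singleton (dense_compl_singleton x)
  exact dense_of_mem_residual hmem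

/-- A set containing a nonempty open ball in a perfect Baire metric space is uncountable. -/
lemma aux_not_countable_of_ball_subset {X : Type*} [MetricSpace X] [PerfectSpace X]
    [BaireSpace X] {s : Set X} {x : X} {r : ℝ} (hr : 0 < r)
    (h : Metric.ball x r ⊆ s) (hs : s.Countable) : False := by
  have hd := aux_countable_dense_compl hs
  obtain ⟨y, hy1, hy2⟩ := hd.exists_mem_open isOpen_ball ⟨x, mem_ball_self hr⟩
  exact hy1 (h hy2)

/-- Existence of a maximal δ-separated finite set in a compact metric space. -/
lemma aux_exists_maximal_separated {X : Type*} [MetricSpace X] [CompactSpace X] [Nonempty X]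
    {δ : ℝ} (hδ : 0 < δ) :
    ∃ s : Set X, s.Finite ∧ (∀ x ∈ s, ∀ y ∈ s, x ≠ y → δ < dist x y) ∧
      (∀ y : X, ∃ x ∈ s, dist y x ≤ δ) := by
  set S : Set (Set X) := {A | ∀ x ∈ A, ∀ y ∈ A, x ≠ y → δ < dist x y} with hS
  obtain ⟨m, hm⟩ := zorn_subset S (fun c hcS hc => by
    refine ⟨⋃₀ c, ?_, fun t ht => subset_sUnion_of_mem ht⟩
    intro x hx y hy hxy
    obtain ⟨A, hA, hxA⟩ := hx
    obtain ⟨B, hB, hyB⟩ := hy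
    rcases hc.total hA hB with h | h
    · exact hcS hB x (h hxA) y hyB hxy
    · exact hcS hA x hxA y (h hyB) hxy)
  -- m is finite
  obtain ⟨t, -, htfin, htcov⟩ := finite_cover_balls_of_compact (isCompact_univ (X := X))
    (by positivity : (0:ℝ) < δ/2)
  have hinj : ∀ x ∈ m, ∃ z ∈ t, x ∈ Metric.ball z (δ/2) := by
    intro x _
    have := htcov (mem_univ x)
    simpa using this
  choose f hf1 hf2 using hinj
  haveI : Finite t := htfin
  have hg : Function.Injective (fun x : m => (⟨f x x.2, hf1 x x.2⟩ : t)) := by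
    rintro ⟨a, ha⟩ ⟨b, hb⟩ hab
    have hfab : f a ha = f b hb := congrArg Subtype.val hab
    by_contra hne
    have hne' : a ≠ b := fun h => hne (Subtype.ext h)
    have h1 := hf2 a ha
    have h2 := hf2 b hb
    rw [hfab] at h1
    rw [mem_ball] at h1 h2
    have hab' : dist a b < δ := by
      calc dist a b ≤ dist a (f b hb) + dist (f b hb) b := dist_triangle _ _ _
      _ < δ/2 + δ/2 := by rw [dist_comm (f b hb) b]; linarith
      _ = δ := by ring
    exact absurd hab' (not_lt.mpr (le_of_lt (hm.1 a ha b hb hne')))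
  haveI : Finite m := Finite.of_injective _ hg
  have hmfin : m.Finite := Set.toFinite m
  refine ⟨m, hmfin, hm.1, ?_⟩
  intro y
  by_contra hcon
  push_neg at hcon
  have hins : insert y m ∈ S := by
    intro a ha b hb hab
    rcases ha with rfl | ha
    · rcases hb with rfl | hb
      · exact absurd rfl hab
      · exact hcon b hb
    · rcases hb with rfl | hb
      · rw [dist_comm]; exact hcon a ha
      · exact hm.1 a ha b hb hab
  have hsub := hm.2 hins (subset_insert y m)
  have hym : y ∈ m := hsub (mem_insert y m)
  have := hcon y hym
  simp at this
  linarith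

/-- Let `(X, d)` be a (nonempty) compact metric space with no isolated
points. Then for every `ε > 0` there is a finite partition `X = X₁ ∪ ⋯ ∪ X_N` into pairwise
disjoint sets, each of which is an uncountable Gδ set of diameter at most `ε`. -/
theorem exists_finite_partition_uncountable_Gdelta_small_diam
    {X : Type*} [MetricSpace X] [CompactSpace X] [Nonempty X] [PerfectSpace X]
    {ε : ℝ} (hε : 0 < ε) :
    ∃ (N : ℕ) (P : Fin N → Set X),
      (⋃ j, P j) = Set.univ ∧
      (Pairwise fun i j => Disjoint (P i) (P j)) ∧
      (∀ j, ¬ (P j).Countable) ∧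
      (∀ j, IsGδ (P j)) ∧
      (∀ j, Metric.diam (P j) ≤ ε) := by
  have hδ : (0:ℝ) < ε/2 := by linarith
  obtain ⟨s, hsfin, hsep, hcov⟩ := aux_exists_maximal_separated (X := X) hδ
  haveI := hsfin.fintype
  set N := Fintype.card s with hN
  obtain ⟨e⟩ : Nonempty (Fin N ≃ s) := ⟨(Fintype.equivFin s).symm⟩
  set x : Fin N → X := fun j => (e j : X) with hx
  set C : Fin N → Set X := fun j => Metric.closedBall (x j) (ε/2) with hC
  set D : Fin N → Set X := fun j => ⋃ i ∈ {i : Fin N | i < j}, C i with hD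
  set P : Fin N → Set X := fun j => C j \ D j with hP
  have hxne : ∀ i j : Fin N, i ≠ j → ε/2 < dist (x i) (x j) := by
    intro i j hij
    exact hsep _ (e i).2 _ (e j).2 (fun h => hij (e.injective (Subtype.ext h)))
  have hCclosed : ∀ j, IsClosed (C j) := fun j => isClosed_closedBall
  have hDclosed : ∀ j : Fin N, IsClosed (D j) :=
    fun j => (Set.toFinite _).isClosed_biUnion fun i _ => hCclosed i
  refine ⟨N, P, ?_, ?_, ?_, ?_, ?_⟩
  · -- union is univ
    ext y
    simp only [mem_iUnion, mem_univ, iff_true]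
    obtain ⟨z, hz, hdz⟩ := hcov y
    have hy : ∃ j : Fin N, y ∈ C j := ⟨e.symm ⟨z, hz⟩, by
      simp only [hC, mem_closedBall, hx]
      rw [e.apply_symm_apply]
      exact hdz⟩
    classical
    obtain ⟨j, hj, hjmin⟩ := Finset.exists_min_image
      (Finset.univ.filter fun j : Fin N => y ∈ C j) id
      (by obtain ⟨j, hj⟩ := hy; exact ⟨j, by simp [hj]⟩)
    simp only [Finset.mem_filter, Finset.mem_univ, true_and] at hj hjmin
    refine ⟨j, hj, ?_⟩
    intro hmem
    obtain ⟨i, hi, hyi⟩ := mem_iUnion₂.mp hmem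
    exact absurd (hjmin i hyi) (not_le.mpr hi)
  · -- pairwise disjoint
    have key : ∀ i j : Fin N, i < j → Disjoint (P i) (P j) := by
      intro i j hij
      refine Set.disjoint_left.mpr fun y hyi hyj => ?_
      refine hyj.2 ?_
      simp only [hD, mem_iUnion, mem_setOf_eq]
      exact ⟨i, hij, hyi.1⟩
    intro i j hij
    rcases lt_or_gt_of_ne hij with h | h
    · exact key i j h
    · exact (key j i h).symm
  · -- uncountable
    intro j hcount
    have hxj : x j ∉ D j := by
      intro hmem
      obtain ⟨i, hi, hxi⟩ := mem_iUnion₂.mp hmem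
      have hlt : ε/2 < dist (x i) (x j) := hxne i j hi.ne
      rw [hC, mem_closedBall, dist_comm] at hxi
      linarith
    have hopen : IsOpen (D j)ᶜ := (hDclosed j).isOpen_compl
    obtain ⟨r, hr, hball⟩ := Metric.isOpen_iff.mp hopen (x j) hxj
    have hr'0 : 0 < min r (ε/2) := lt_min hr hδ
    have hsub : Metric.ball (x j) (min r (ε/2)) ⊆ P j := by
      intro y hy
      rw [mem_ball] at hy
      exact ⟨mem_closedBall.mpr (le_of_lt (lt_of_lt_of_le hy (min_le_right _ _))),
        hball (mem_ball.mpr (lt_of_lt_of_le hy (min_le_left _ _)))⟩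
    exact aux_not_countable_of_ball_subset hr'0 hsub hcount
  · -- Gδ
    intro j
    exact ((hCclosed j).isGδ).inter ((hDclosed j).isOpen_compl.isGδ)
  · -- diam
    intro j
    calc Metric.diam (P j) ≤ Metric.diam (C j) := Metric.diam_mono diff_subset isBounded_closedBall
    _ ≤ 2 * (ε/2) := diam_closedBall (le_of_lt hδ)
    _ = ε := by ring
end

section
/- Let (X,d) be a compact metric space with no isolated points, Z a Polish space, and p : Z → X a continuous surjection. Then for every ε > 0 there exists a Borel isomorphism p̃ : Z → X such that d(p̃(z), p(z)) < ε for all z ∈ Z. -/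
open Set Metric

/-- The Cantor space is not countable. -/
private lemma not_countable_nat_bool : ¬ Countable (ℕ → Bool) := by
  intro h
  have he : (ℕ → Prop) ≃ (ℕ → Bool) := Equiv.arrowCongr (Equiv.refl ℕ) Equiv.propEquivBool
  have : Countable (Set ℕ) := Countable.of_equiv _ he.symm
  obtain ⟨f, hf⟩ := exists_surjective_nat (Set ℕ)
  exact Function.cantor_surjective f hf

/-- In a complete perfect metric space, open balls are uncountable. -/
private lemma ball_not_countable {X : Type*} [MetricSpace X] [CompleteSpace X] [PerfectSpace X]
    (y : X) {s : ℝ} (hs : 0 < s) : ¬ (Metric.ball y s).Countable := by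
  intro hcount
  have hpre : Preperfect (Metric.ball y (s/2)) := by
    have := (PerfectSpace.univ_preperfect (α := X)).open_inter (Metric.isOpen_ball (x := y) (ε := s/2))
    simpa using this
  have hperf : Perfect (closure (Metric.ball y (s/2))) := hpre.perfect_closure
  have hne : (closure (Metric.ball y (s/2))).Nonempty :=
    ⟨y, subset_closure (Metric.mem_ball_self (by linarith))⟩
  obtain ⟨f, hrange, -, hinj⟩ := hperf.exists_nat_bool_injection hne
  have hsub : closure (Metric.ball y (s/2)) ⊆ Metric.ball y s :=
    Metric.closure_ball_subset_closedBall.trans (Metric.closedBall_subset_ball (by linarith))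
  have hrc : (Set.range f).Countable := hcount.mono (hrange.trans hsub)
  have : Countable (ℕ → Bool) := by
    haveI := hrc.to_subtype
    exact Countable.of_equiv _ (Equiv.ofInjective f hinj).symm
  exact not_countable_nat_bool this

/-- Gluing measurable equivalences along countable measurable partitions. -/
private lemma glue_measurableEquiv {ι Z X : Type*} [Countable ι]
    [MeasurableSpace Z] [MeasurableSpace X]
    (Zs : ι → Set Z) (Xs : ι → Set X)
    (hZm : ∀ i, MeasurableSet (Zs i)) (hXm : ∀ i, MeasurableSet (Xs i))
    (hZd : ∀ i j, i ≠ j → Disjoint (Zs i) (Zs j))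
    (hXd : ∀ i j, i ≠ j → Disjoint (Xs i) (Xs j))
    (hZc : ∀ z, ∃ i, z ∈ Zs i) (hXc : ∀ x, ∃ i, x ∈ Xs i)
    (φ : ∀ i, (Zs i) ≃ᵐ (Xs i)) :
    ∃ e : Z ≃ᵐ X, ∀ i, ∀ z ∈ Zs i, e z ∈ Xs i := by
  classical
  choose iZ hiZ using hZc
  choose iX hiX using hXc
  have hiZ' : ∀ z i, z ∈ Zs i → iZ z = i := by
    intro z i hz
    by_contra h
    exact (hZd _ _ h).ne_of_mem (hiZ z) hz rfl
  have hiX' : ∀ x i, x ∈ Xs i → iX x = i := by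
    intro x i hx
    by_contra h
    exact (hXd _ _ h).ne_of_mem (hiX x) hx rfl
  set f : Z → X := fun z => (φ (iZ z) ⟨z, hiZ z⟩ : X) with hf
  set g : X → Z := fun x => ((φ (iX x)).symm ⟨x, hiX x⟩ : Z) with hg
  have keyf : ∀ (i : ι) (z : Z) (hz : z ∈ Zs i), f z = (φ i ⟨z, hz⟩ : X) := by
    intro i z hz
    have h : iZ z = i := hiZ' z i hz
    subst h
    rfl
  have keyg : ∀ (i : ι) (x : X) (hx : x ∈ Xs i), g x = ((φ i).symm ⟨x, hx⟩ : Z) := by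
    intro i x hx
    have h : iX x = i := hiX' x i hx
    subst h
    rfl
  have hfmem : ∀ z, f z ∈ Xs (iZ z) := fun z => (φ (iZ z) ⟨z, hiZ z⟩).2
  have hgmem : ∀ x, g x ∈ Zs (iX x) := fun x => ((φ (iX x)).symm ⟨x, hiX x⟩).2
  have hgf : ∀ z, g (f z) = z := by
    intro z
    rw [keyg (iZ z) (f z) (hfmem z)]
    have h1 : (⟨f z, hfmem z⟩ : Xs (iZ z)) = φ (iZ z) ⟨z, hiZ z⟩ := rfl
    rw [h1, MeasurableEquiv.symm_apply_apply]
  have hfg : ∀ x, f (g x) = x := by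
    intro x
    rw [keyf (iX x) (g x) (hgmem x)]
    have h1 : (⟨g x, hgmem x⟩ : Zs (iX x)) = (φ (iX x)).symm ⟨x, hiX x⟩ := rfl
    rw [h1, MeasurableEquiv.apply_symm_apply]
  have hfm : Measurable f := by
    intro s hs
    have heq : f ⁻¹' s = ⋃ i, Subtype.val '' ((fun w : Zs i => (φ i w : X)) ⁻¹' s) := by
      ext z
      simp only [mem_preimage, mem_iUnion, mem_image]
      constructor
      · intro hz
        exact ⟨iZ z, ⟨z, hiZ z⟩, hz, rfl⟩
      · rintro ⟨i, ⟨w, hw⟩, hws, rfl⟩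
        rw [keyf i w hw]
        exact hws
    rw [heq]
    refine MeasurableSet.iUnion fun i => (hZm i).subtype_image ?_
    exact (measurable_subtype_coe.comp (φ i).measurable) hs
  have hgm : Measurable g := by
    intro s hs
    have heq : g ⁻¹' s = ⋃ i, Subtype.val '' ((fun w : Xs i => ((φ i).symm w : Z)) ⁻¹' s) := by
      ext x
      simp only [mem_preimage, mem_iUnion, mem_image]
      constructor
      · intro hx
        exact ⟨iX x, ⟨x, hiX x⟩, hx, rfl⟩
      · rintro ⟨i, ⟨w, hw⟩, hws, rfl⟩
        rw [keyg i w hw]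
        exact hws
    rw [heq]
    refine MeasurableSet.iUnion fun i => (hXm i).subtype_image ?_
    exact (measurable_subtype_coe.comp (φ i).symm.measurable) hs
  refine ⟨⟨⟨f, g, hgf, hfg⟩, hfm, hgm⟩, ?_⟩
  intro i z hz
  show f z ∈ Xs i
  rw [keyf i z hz]
  exact (φ i ⟨z, hz⟩).2

/-- Let `(X, d)` be a compact metric space with no isolated points, `Z` a
Polish space, and `p : Z → X` a continuous surjection. Then for every `ε > 0` there exists
a Borel isomorphism `p̃ : Z → X` with `d(p̃ z, p z) < ε` for all `z`. -/
theorem exists_borel_iso_close_to_continuous_surjection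
    {X : Type*} [MetricSpace X] [CompactSpace X] [Nonempty X] [PerfectSpace X]
    [MeasurableSpace X] [BorelSpace X]
    {Z : Type*} [TopologicalSpace Z] [PolishSpace Z]
    [MeasurableSpace Z] [BorelSpace Z]
    (p : Z → X) (hp : Continuous p) (hsurj : Function.Surjective p)
    {ε : ℝ} (hε : 0 < ε) :
    ∃ e : Z ≃ᵐ X, ∀ z : Z, dist (e z) (p z) < ε := by
  classical
  set r : ℝ := ε / 8 with hrdef
  have hr : 0 < r := by positivity
  -- finite subcover by balls of radius r
  obtain ⟨t, ht⟩ := isCompact_univ.elim_finite_subcover (fun x : X => Metric.ball x r)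
    (fun x => Metric.isOpen_ball)
    (fun x _ => Set.mem_iUnion.2 ⟨x, Metric.mem_ball_self hr⟩)
  set n := t.card with hn
  set c : Fin n → X := fun i => (t.equivFin.symm i : X) with hc
  have hcover : ∀ x : X, ∃ i, x ∈ Metric.ball (c i) r := by
    intro x
    have := ht (Set.mem_univ x)
    simp only [Set.mem_iUnion] at this
    obtain ⟨y, hy, hxy⟩ := this
    refine ⟨t.equivFin ⟨y, hy⟩, ?_⟩
    have hcy : c (t.equivFin ⟨y, hy⟩) = y := by
      simp [hc]
    rw [hcy]
    exact Metric.mem_ball.1 hxy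
  -- disjointified pieces
  set D : Fin n → Set X :=
    fun i => Metric.ball (c i) r \ ⋃ j, ⋃ (_ : j < i), Metric.ball (c j) r with hD
  have hDsub : ∀ i, D i ⊆ Metric.ball (c i) r := fun i => Set.diff_subset
  have hDm : ∀ i, MeasurableSet (D i) := by
    intro i
    exact measurableSet_ball.diff
      (MeasurableSet.iUnion fun j => MeasurableSet.iUnion fun _ => measurableSet_ball)
  have hDdisj : ∀ i j, i ≠ j → Disjoint (D i) (D j) := by
    intro i j hij
    rw [Set.disjoint_left]
    intro x hxi hxj
    rcases hij.lt_or_gt with h | h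
    · exact hxj.2 (Set.mem_iUnion.2 ⟨i, Set.mem_iUnion.2 ⟨h, hxi.1⟩⟩)
    · exact hxi.2 (Set.mem_iUnion.2 ⟨j, Set.mem_iUnion.2 ⟨h, hxj.1⟩⟩)
  have hDcover : ∀ x : X, ∃ i, x ∈ D i := by
    intro x
    have hne : (Finset.univ.filter (fun i => x ∈ Metric.ball (c i) r)).Nonempty := by
      obtain ⟨i, hi⟩ := hcover x
      exact ⟨i, by simpa using hi⟩
    set i0 := (Finset.univ.filter (fun i => x ∈ Metric.ball (c i) r)).min' hne with hi0
    have hi0mem : x ∈ Metric.ball (c i0) r := by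
      have := (Finset.univ.filter (fun i => x ∈ Metric.ball (c i) r)).min'_mem hne
      exact (Finset.mem_filter.1 this).2
    refine ⟨i0, Metric.mem_ball.1 hi0mem, ?_⟩
    intro hmem
    simp only [Set.mem_iUnion] at hmem
    obtain ⟨j, hj, hxj⟩ := hmem
    have : i0 ≤ j := Finset.min'_le _ j (by simpa using hxj)
    exact absurd hj (not_lt.2 this)
  -- uncountability of balls
  have hball : ∀ (y : X) (s : ℝ), 0 < s → ¬ (Metric.ball y s).Countable :=
    fun y s hs => ball_not_countable y hs
  -- choose merging targets
  have hσ : ∀ i, ∃ j, (∀ x ∈ D i, dist x (c j) < 4 * r) ∧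
      ((D i).Nonempty → ¬ (D j).Countable) ∧ (¬ (D i).Countable → j = i) := by
    intro i
    by_cases hcnt : (D i).Countable
    · by_cases hne : (D i).Nonempty
      · obtain ⟨y, hy⟩ := hne
        have hbne : ∃ j, ¬ (D j ∩ Metric.ball y r).Countable := by
          by_contra h
          push_neg at h
          apply hball y r hr
          have heq : Metric.ball y r = ⋃ j, (D j ∩ Metric.ball y r) := by
            ext x
            simp only [Set.mem_iUnion, Set.mem_inter_iff]
            constructor
            · intro hx
              obtain ⟨j, hj⟩ := hDcover x
              exact ⟨j, hj, hx⟩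
            · rintro ⟨j, -, hx⟩
              exact hx
          rw [heq]
          exact Set.countable_iUnion h
        obtain ⟨j, hj⟩ := hbne
        have hjne : (D j ∩ Metric.ball y r).Nonempty := by
          rw [Set.nonempty_iff_ne_empty]
          intro h
          exact hj (h ▸ Set.countable_empty)
        obtain ⟨w, hwD, hwb⟩ := hjne
        refine ⟨j, ?_, fun _ => fun hjc => hj (hjc.mono Set.inter_subset_left), fun h => absurd hcnt h⟩
        intro x hx
        have h1 : dist x y < 2 * r := by
          have hx1 : dist x (c i) < r := hDsub i hx
          have hy1 : dist y (c i) < r := hDsub i hy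
          calc dist x y ≤ dist x (c i) + dist (c i) y := dist_triangle _ _ _
            _ = dist x (c i) + dist y (c i) := by rw [dist_comm (c i) y]
            _ < 2 * r := by linarith
        have h2 : dist y w < r := by rw [dist_comm]; exact hwb
        have h3 : dist w (c j) < r := hDsub j hwD
        calc dist x (c j) ≤ dist x y + dist y w + dist w (c j) := dist_triangle4 _ _ _ _
          _ < 4 * r := by linarith
      · refine ⟨i, ?_, ?_, fun _ => rfl⟩
        · intro x hx
          exact absurd ⟨x, hx⟩ hne
        · intro h
          exact absurd h hne
    · refine ⟨i, ?_, fun _ => hcnt, fun _ => rfl⟩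
      intro x hx
      have : dist x (c i) < r := hDsub i hx
      linarith
  choose σ hσ1 hσ2 hσ3 using hσ
  -- final partition of X
  set A : Fin n → Set X := fun j => ⋃ i, ⋃ (_ : σ i = j), D i with hA
  have hAm : ∀ j, MeasurableSet (A j) :=
    fun j => MeasurableSet.iUnion fun i => MeasurableSet.iUnion fun _ => hDm i
  have hAdisj : ∀ j₁ j₂, j₁ ≠ j₂ → Disjoint (A j₁) (A j₂) := by
    intro j₁ j₂ hne
    rw [Set.disjoint_left]
    intro x hx1 hx2
    simp only [hA, Set.mem_iUnion] at hx1 hx2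
    obtain ⟨i₁, hσ1', hx1⟩ := hx1
    obtain ⟨i₂, hσ2', hx2⟩ := hx2
    have : i₁ = i₂ := by
      by_contra h
      exact (hDdisj i₁ i₂ h).ne_of_mem hx1 hx2 rfl
    subst this
    exact hne (hσ1'.symm.trans hσ2')
  have hAcover : ∀ x : X, ∃ j, x ∈ A j := by
    intro x
    obtain ⟨i, hi⟩ := hDcover x
    exact ⟨σ i, Set.mem_iUnion.2 ⟨i, Set.mem_iUnion.2 ⟨rfl, hi⟩⟩⟩
  have hAball : ∀ j, ∀ x ∈ A j, dist x (c j) < 4 * r := by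
    intro j x hx
    simp only [hA, Set.mem_iUnion] at hx
    obtain ⟨i, hσi, hxi⟩ := hx
    have := hσ1 i x hxi
    rwa [hσi] at this
  have hAuncount : ∀ j, (A j).Nonempty → ¬ (A j).Countable := by
    intro j hne hcount
    obtain ⟨x, hx⟩ := hne
    simp only [hA, Set.mem_iUnion] at hx
    obtain ⟨i, hσi, hxi⟩ := hx
    have hDj : ¬ (D j).Countable := by
      have := hσ2 i ⟨x, hxi⟩
      rwa [hσi] at this
    have hσj : σ j = j := hσ3 j hDj
    have hsubset : D j ⊆ A j := by
      intro y hy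
      exact Set.mem_iUnion.2 ⟨j, Set.mem_iUnion.2 ⟨hσj, hy⟩⟩
    exact hDj (hcount.mono hsubset)
  -- preimage partition of Z
  set Zs : Fin n → Set Z := fun j => p ⁻¹' (A j) with hZs
  have hZm : ∀ j, MeasurableSet (Zs j) := fun j => hp.measurable (hAm j)
  have hZdisj : ∀ j₁ j₂, j₁ ≠ j₂ → Disjoint (Zs j₁) (Zs j₂) :=
    fun j₁ j₂ h => Set.disjoint_left.2 fun z hz1 hz2 =>
      (hAdisj j₁ j₂ h).ne_of_mem hz1 hz2 rfl
  have hZcover : ∀ z : Z, ∃ j, z ∈ Zs j := fun z => hAcover (p z)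
  have hZuncount : ∀ j, (A j).Nonempty → ¬ (Zs j).Countable := by
    intro j hne hcount
    apply hAuncount j hne
    have : p '' (Zs j) = A j := Set.image_preimage_eq _ hsurj
    rw [← this]
    exact hcount.image p
  -- measurable equivalences on pieces
  have hφ : ∀ j, Nonempty ((Zs j) ≃ᵐ (A j)) := by
    intro j
    haveI := (hZm j).standardBorel
    haveI := (hAm j).standardBorel
    by_cases hne : (A j).Nonempty
    · have h1 : ¬ Countable (Zs j) := by
        rw [Set.countable_coe_iff]
        exact hZuncount j hne
      have h2 : ¬ Countable (A j) := by
        rw [Set.countable_coe_iff]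
        exact hAuncount j hne
      exact ⟨PolishSpace.measurableEquivOfNotCountable h1 h2⟩
    · rw [Set.not_nonempty_iff_eq_empty] at hne
      have hZe : Zs j = ∅ := by
        rw [hZs]
        simp [hne]
      haveI : IsEmpty (A j) := by rw [hne]; infer_instance
      haveI : IsEmpty (Zs j) := by rw [hZe]; infer_instance
      exact ⟨PolishSpace.Equiv.measurableEquiv (Equiv.equivOfIsEmpty _ _)⟩
  set φ : ∀ j, (Zs j) ≃ᵐ (A j) := fun j => (hφ j).some with hφdef
  obtain ⟨e, he⟩ := glue_measurableEquiv Zs A hZm hAm hZdisj hAdisj hZcover hAcover φ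
  refine ⟨e, ?_⟩
  intro z
  obtain ⟨j, hj⟩ := hZcover z
  have h1 : e z ∈ A j := he j z hj
  have h2 : p z ∈ A j := hj
  have h3 : dist (e z) (c j) < 4 * r := hAball j _ h1
  have h4 : dist (p z) (c j) < 4 * r := hAball j _ h2
  calc dist (e z) (p z) ≤ dist (e z) (c j) + dist (c j) (p z) := dist_triangle _ _ _
    _ = dist (e z) (c j) + dist (p z) (c j) := by rw [dist_comm (c j)]
    _ < 8 * r := by linarith
    _ = ε := by rw [hrdef]; ring
end

section
/- Let M₁, M₂ be von Neumann algebras with M₁ a factor, and let p ∈ M₁ be a nonzero projection. Then the set (p ⊗ M₂) ∪ (M₁ ⊗ 1) generates M₁ ⊗ M₂ as a von Neumann algebra. -/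
/-!
If `y` commutes with `M₁` and with `p M₂`, and `x ∈ M₂`, then `y x - x y` vanishes on every
vector `a p ξ` with `a ∈ M₁`. The closed span of these vectors is invariant under `M₁` and
`M₁'`, so its projection lies in `M₁ ∩ M₁' = ℂ 1`; since `p ≠ 0` it is `1`, hence `x y = y x`.
-/

open ContinuousLinearMap Module.End

theorem Commute.sub_mul_mul_eq_zero {R : Type*} [Ring R] {x y a p : R}
    (hxa : Commute x a) (hxp : Commute x p) (hya : Commute y a) (hyp : Commute y p)
    (hypx : Commute y (p * x)) : (y * x - x * y) * (a * p) = 0 := by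
  have hyx : y * x * (a * p) = a * (p * x * y) := by
    rw [mul_assoc, (hxa.mul_right hxp).eq, ← mul_assoc, (hya.mul_right hyp).eq, mul_assoc,
      mul_assoc, ← mul_assoc p, ← hyp.eq, mul_assoc y, hypx.eq]
  have hxy : x * y * (a * p) = a * (p * x * y) := by
    rw [mul_assoc, (hya.mul_right hyp).eq, ← mul_assoc, (hxa.mul_right hxp).eq, mul_assoc,
      mul_assoc, ← mul_assoc p]
  rw [sub_mul, hyx, hxy, sub_self]

namespace VonNeumannAlgebra

variable {H : Type*} [NormedAddCommGroup H] [InnerProductSpace ℂ H] [CompleteSpace H]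

def IsFactor (M : VonNeumannAlgebra H) : Prop :=
  ∀ x ∈ M, (∀ y ∈ M, x * y = y * x) → ∃ c : ℂ, x = c • (1 : H →L[ℂ] H)

theorem IsFactor.eq_top_of_mem_invtSubmodule {M : VonNeumannAlgebra H} (hM : M.IsFactor)
    {V : Submodule ℂ H} (hV : IsClosed (V : Set H)) (hV0 : V ≠ ⊥)
    (hMV : ∀ y ∈ M, V ∈ invtSubmodule y) (hM'V : ∀ y ∈ M.commutant, V ∈ invtSubmodule y) :
    V = ⊤ := by
  have : CompleteSpace V := hV.completeSpace_coe
  have hQ := isStarProjection_starProjection (U := V)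
  have hQM : V.starProjection ∈ M := by
    rw [IsStarProjection.mem_iff hQ]; simpa using hM'V
  have hQM' : V.starProjection ∈ M.commutant := by
    rw [IsStarProjection.mem_iff hQ, commutant_commutant]; simpa using hMV
  obtain ⟨c, hc⟩ := hM _ hQM fun y hy => (mem_commutant_iff.mp hQM' y hy).symm
  obtain ⟨v, hv, hv0⟩ := V.exists_mem_ne_zero_of_ne_bot hV0
  have hcv : c • v = v := by
    simpa [hc] using Submodule.starProjection_eq_self_iff.mpr hv
  have hc1 : c = 1 := by
    have : (c - 1) • v = 0 := by rw [sub_smul, one_smul, hcv, sub_self]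
    exact sub_eq_zero.mp ((smul_eq_zero.mp this).resolve_right hv0)
  rw [← V.range_starProjection, hc, hc1, one_smul]
  exact LinearMap.range_id

theorem IsFactor.eq_zero_of_forall_mul_mul_eq_zero {M : VonNeumannAlgebra H} (hM : M.IsFactor)
    {p : H →L[ℂ] H} (hpM : p ∈ M) (hp0 : p ≠ 0) {T : H →L[ℂ] H}
    (hT : ∀ a ∈ M, T * (a * p) = 0) : T = 0 := by
  set g : Set H := {v | ∃ a ∈ M, ∃ ξ, (a * p) ξ = v}
  set V := (Submodule.span ℂ g).topologicalClosure
  have hinvt : ∀ y : H →L[ℂ] H, Set.MapsTo y g g → V ∈ invtSubmodule y := fun y hy =>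
    Submodule.topologicalClosure_mem_invtSubmodule <| by
      rw [mem_invtSubmodule, Submodule.span_le]
      exact fun v hv => Submodule.subset_span (hy hv)
  have hV0 : V ≠ ⊥ := by
    obtain ⟨ξ, hξ⟩ : ∃ ξ, p ξ ≠ 0 := by
      by_contra! h
      exact hp0 (ContinuousLinearMap.ext h)
    exact (Submodule.ne_bot_iff V).mpr ⟨p ξ, Submodule.le_topologicalClosure _
      (Submodule.subset_span ⟨1, one_mem M, ξ, by simp⟩), hξ⟩
  have hVtop : V = ⊤ := by
    refine hM.eq_top_of_mem_invtSubmodule (Submodule.isClosed_topologicalClosure _) hV0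
      (fun y hy => hinvt y ?_) (fun y hy => hinvt y ?_)
    · rintro _ ⟨a, ha, ξ, rfl⟩
      exact ⟨y * a, mul_mem hy ha, ξ, by simp⟩
    · rintro _ ⟨a, ha, ξ, rfl⟩
      exact ⟨a, ha, y ξ, congr($(mem_commutant_iff.mp hy (a * p) (mul_mem ha hpM)) ξ)⟩
  have hVker : V ≤ T.ker :=
    Submodule.topologicalClosure_minimal _
      (Submodule.span_le.mpr fun _ ⟨a, ha, ξ, hv⟩ => hv ▸ congr($(hT a ha) ξ))
      T.isClosed_ker
  ext v
  exact hVker (hVtop ▸ Submodule.mem_top)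

end VonNeumannAlgebra

theorem factor_corner_tensor_generates_general
    {H : Type*} [NormedAddCommGroup H] [InnerProductSpace ℂ H] [CompleteSpace H]
    (M₁ M₂ : VonNeumannAlgebra H)
    (hcomm : ∀ x ∈ M₁, ∀ y ∈ M₂, x * y = y * x)
    (hfactor : ∀ x ∈ M₁, (∀ y ∈ M₁, x * y = y * x) → ∃ c : ℂ, x = c • (1 : H →L[ℂ] H))
    (p : H →L[ℂ] H) (hpM : p ∈ M₁)
    (hp0 : p ≠ 0) :
    (M₁ : Set (H →L[ℂ] H)) ∪ (M₂ : Set (H →L[ℂ] H)) ⊆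
      Set.centralizer (Set.centralizer
        (((fun z => p * z) '' (M₂ : Set (H →L[ℂ] H))) ∪ (M₁ : Set (H →L[ℂ] H)))) := by
  rintro x (hx | hx)
  · exact Set.subset_centralizer_centralizer (Or.inr hx)
  · intro y hy
    have hyM₁ : ∀ a ∈ M₁, Commute y a := fun a ha => (hy a (Or.inr ha)).symm
    have hxM₁ : ∀ a ∈ M₁, Commute x a := fun a ha => (hcomm a ha x hx).symm
    have hyx : y * x - x * y = 0 :=
      VonNeumannAlgebra.IsFactor.eq_zero_of_forall_mul_mul_eq_zero hfactor hpM hp0 fun a ha =>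
        Commute.sub_mul_mul_eq_zero (hxM₁ a ha) (hxM₁ p hpM) (hyM₁ a ha) (hyM₁ p hpM)
          (hy (p * x) (Or.inl ⟨x, hx, rfl⟩)).symm
    exact sub_eq_zero.mp hyx

/-- Let `M₁, M₂` be von Neumann algebras with `M₁` a factor, and let
`p ∈ M₁` be a nonzero projection. Then `(p ⊗ M₂) ∪ (M₁ ⊗ 1)` generates `M₁ ⊗ M₂` as a von
Neumann algebra.

We formalize the von Neumann tensor product by realizing `M₁` and `M₂` as pointwise
commuting von Neumann subalgebras of `B(H)` (so `x ⊗ y` corresponds to `x * y`, `p ⊗ z`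
to `p * z`, and `M₁ ⊗ M₂` to the von Neumann algebra generated by `M₁ ∪ M₂`, i.e. the
double commutant `(M₁ ∪ M₂)''`). The conclusion is that the double commutant of
`{p * z | z ∈ M₂} ∪ M₁` contains `M₁ ∪ M₂`, hence contains (so equals) `(M₁ ∪ M₂)''`. -/
theorem factor_corner_tensor_generates
    {H : Type*} [NormedAddCommGroup H] [InnerProductSpace ℂ H] [CompleteSpace H]
    (M₁ M₂ : VonNeumannAlgebra H)
    (hcomm : ∀ x ∈ M₁, ∀ y ∈ M₂, x * y = y * x)
    (hfactor : ∀ x ∈ M₁, (∀ y ∈ M₁, x * y = y * x) → ∃ c : ℂ, x = c • (1 : H →L[ℂ] H))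
    (p : H →L[ℂ] H) (hpM : p ∈ M₁) (hpsa : IsSelfAdjoint p) (hpidem : p * p = p)
    (hp0 : p ≠ 0) :
    (M₁ : Set (H →L[ℂ] H)) ∪ (M₂ : Set (H →L[ℂ] H)) ⊆
      Set.centralizer (Set.centralizer
        (((fun z => p * z) '' (M₂ : Set (H →L[ℂ] H))) ∪ (M₁ : Set (H →L[ℂ] H)))) :=
  factor_corner_tensor_generates_general M₁ M₂ hcomm hfactor p hpM hp0
end

section
/- Let A be a finitely generated unital *-algebra over ℂ with ordered generating set (s₁,…,s_n), and fix k ∈ ℕ. Identify the set V_k of unital *-homomorphisms A → M_k(ℂ) with a subset of M_k(ℂ)ⁿ. Then the subset V_k^sur ⊆ V_k of surjective *-homomorphisms is open in the Zariski topology (as a real algebraic variety), and in particular open in the Euclidean topology. -/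
/-!
Whether `φ` is surjective depends only on the tuple `T = φ ∘ s`: it is surjective iff the
`*`-algebra generated by the `Tᵢ` is all of `M_k(ℂ)`. Let `M` be the span of `1`, the `Tᵢ` and
the `Tᵢ*`. The powers `M ^ d` increase and stay constant from the first `d` with
`M ^ (d + 1) = M ^ d` on; comparing dimensions, this happens by `d = k²`. Hence `T` generates
iff the words of length `k²` in `1, Tᵢ, Tᵢ*` span `M_k(ℂ)`, i.e. iff `det (B Bᴴ) ≠ 0`, where the
columns of `B` are these words. This determinant is a polynomial in the entries of the `Tᵢ` and
their conjugates, so it equals `p + i q` for real polynomials `p, q` in the real and imaginary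
parts of the entries. The surjective homomorphisms are therefore cut out of `V_k` by
`p ≠ 0 ∨ q ≠ 0`, which is also an open condition.
-/

open Submodule Module Matrix MvPolynomial Complex
open scoped Pointwise

section PowerStabilization

variable {K B : Type*} [Field K] [Ring B] [Algebra K B] {M : Submodule K B}

theorem Submodule.pow_add_le_of_pow_succ_le {d : ℕ} (h : M ^ (d + 1) ≤ M ^ d) (e : ℕ) :
    M ^ (d + e) ≤ M ^ d := by
  induction e with
  | zero => rfl
  | succ e ih =>
    calc M ^ (d + (e + 1)) = M ^ (d + e) * M := pow_succ _ _
      _ ≤ M ^ d * M := mul_le_mul_left ih _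
      _ ≤ M ^ d := h

variable [FiniteDimensional K B]

theorem Submodule.exists_pow_succ_le_pow (h1 : (1 : B) ∈ M) :
    ∃ d ≤ finrank K B, M ^ (d + 1) ≤ M ^ d := by
  by_contra! hstrict
  have hlt : ∀ d ≤ finrank K B, M ^ d < M ^ (d + 1) := fun d hd =>
    lt_of_le_not_ge (pow_le_pow_right' (one_le.mpr h1) d.le_succ) (hstrict d hd)
  have hrank : ∀ d ≤ finrank K B + 1, d ≤ finrank K ↥(M ^ d) := by
    intro d
    induction d with
    | zero => simp
    | succ d ih =>
      intro hd
      have hstep := Submodule.finrank_lt_finrank_of_lt (hlt d (by omega))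
      have hd' := ih (by omega)
      omega
  have := (hrank _ le_rfl).trans (Submodule.finrank_le (M ^ (finrank K B + 1)))
  omega

theorem Submodule.pow_le_pow_finrank (h1 : (1 : B) ∈ M) (e : ℕ) : M ^ e ≤ M ^ finrank K B := by
  obtain ⟨d, hd, hstab⟩ := exists_pow_succ_le_pow h1
  rcases le_total e d with he | he
  · exact pow_le_pow_right' (one_le.mpr h1) (he.trans hd)
  · obtain ⟨e, rfl⟩ := Nat.exists_eq_add_of_le he
    exact (pow_add_le_of_pow_succ_le hstab e).trans (pow_le_pow_right' (one_le.mpr h1) hd)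

theorem Submodule.adjoin_toSubmodule_eq_pow_finrank (h1 : (1 : B) ∈ M) :
    Subalgebra.toSubmodule (Algebra.adjoin K (M : Set B)) = M ^ finrank K B := by
  refine le_antisymm (fun x hx => ?_) ?_
  · induction hx using Algebra.adjoin_induction with
    | mem x hx => exact pow_le_pow_finrank h1 1 (by simpa using hx)
    | algebraMap r => exact pow_le_pow_finrank h1 0 (algebraMap_mem r)
    | add x y _ _ hx hy => exact add_mem hx hy
    | mul x y _ _ hx hy =>
      exact pow_le_pow_finrank h1 _ (pow_add M _ _ ▸ mul_mem_mul hx hy)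
  · induction finrank K B with
    | zero => exact one_le.mpr (Subalgebra.one_mem _)
    | succ e ih =>
      rw [pow_succ]
      exact mul_le.mpr fun a ha b hb => Subalgebra.mul_mem _ (ih ha) (Algebra.subset_adjoin hb)

end PowerStabilization

theorem Set.range_pow {α L : Type*} [Monoid α] (f : L → α) (d : ℕ) :
    Set.range f ^ d = Set.range fun w : Fin d → L => (List.ofFn (f ∘ w)).prod := by
  ext a
  rw [Set.mem_pow]
  constructor
  · rintro ⟨g, rfl⟩
    choose w hw using fun i => (g i).2
    exact ⟨w, by simp only [Function.comp_def, hw]⟩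
  · rintro ⟨w, rfl⟩
    exact ⟨fun i => ⟨f (w i), w i, rfl⟩, rfl⟩

section Gram

variable {R m n : Type*} [Field R] [Fintype m] [Fintype n]

theorem Matrix.range_mulVecLin_eq_top_iff_rank (A : Matrix m n R) :
    LinearMap.range A.mulVecLin = ⊤ ↔ A.rank = Fintype.card m := by
  rw [Matrix.rank, ← Module.finrank_fintype_fun_eq_card (R := R)]
  exact ⟨fun h => by rw [h, finrank_top], Submodule.eq_top_of_finrank_eq⟩

variable [PartialOrder R] [StarRing R] [StarOrderedRing R] [DecidableEq m]

theorem Matrix.span_range_col_eq_top_iff_det_ne_zero (A : Matrix m n R) :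
    span R (Set.range A.col) = ⊤ ↔ (A * Aᴴ).det ≠ 0 := by
  rw [← Matrix.range_mulVecLin, range_mulVecLin_eq_top_iff_rank, ← rank_self_mul_conjTranspose,
    ← range_mulVecLin_eq_top_iff_rank, LinearMap.range_eq_top, coe_mulVecLin,
    mulVec_surjective_iff_isUnit, isUnit_iff_isUnit_det, isUnit_iff_ne_zero]

theorem Module.Basis.span_range_eq_top_iff_det_ne_zero {V η : Type*} [AddCommGroup V] [Module R V]
    [Fintype η] (b : Basis m R V) (v : η → V) :
    span R (Set.range v) = ⊤ ↔ (b.toMatrix v * (b.toMatrix v)ᴴ).det ≠ 0 := by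
  rw [← Matrix.span_range_col_eq_top_iff_det_ne_zero, ← Submodule.map_eq_top_iff (e := b.equivFun),
    Submodule.map_span, ← Set.range_comp]
  rfl

end Gram

section RealPolynomialFunctions

variable {X σ : Type*} (c : X → σ → ℝ)

def realPolyFunctions : Subalgebra ℂ (X → ℂ) where
  carrier := {f | ∃ p q : MvPolynomial σ ℝ, ∀ x, f x = eval (c x) p + eval (c x) q * I}
  mul_mem' := by
    rintro f g ⟨p, q, hf⟩ ⟨p', q', hg⟩
    refine ⟨p * p' - q * q', p * q' + q * p', fun x => ?_⟩
    simp only [Pi.mul_apply, hf, hg, map_sub, map_add, map_mul]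
    push_cast
    linear_combination (eval (c x) q * eval (c x) q' : ℂ) * I_sq
  add_mem' := by
    rintro f g ⟨p, q, hf⟩ ⟨p', q', hg⟩
    refine ⟨p + p', q + q', fun x => ?_⟩
    simp only [Pi.add_apply, hf, hg, map_add]
    push_cast
    ring
  algebraMap_mem' z := ⟨C z.re, C z.im, fun x => by simp [re_add_im]⟩

variable {c}

theorem star_mem_realPolyFunctions {f : X → ℂ} (hf : f ∈ realPolyFunctions c) :
    star f ∈ realPolyFunctions c := by
  obtain ⟨p, q, hf⟩ := hf
  exact ⟨p, -q, fun x => by simp [hf]⟩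

theorem exists_finset_ne_zero_iff_of_mem_realPolyFunctions {f : X → ℂ}
    (hf : f ∈ realPolyFunctions c) :
    ∃ P : Finset (MvPolynomial σ ℝ), ∀ x, f x ≠ 0 ↔ ∃ p ∈ P, eval (c x) p ≠ 0 := by
  classical
  obtain ⟨p, q, hf⟩ := hf
  refine ⟨{p, q}, fun x => ?_⟩
  simp [hf, Complex.ext_iff, imp_iff_not_or, or_and_right, exists_or]

theorem continuous_of_mem_realPolyFunctions [TopologicalSpace X] (hc : Continuous c)
    {f : X → ℂ} (hf : f ∈ realPolyFunctions c) : Continuous f := by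
  obtain ⟨p, q, hf⟩ := hf
  rw [funext hf]
  have := (continuous_eval p).comp hc
  have := (continuous_eval q).comp hc
  fun_prop

end RealPolynomialFunctions

section MatrixFunctions

variable {R X A : Type*} [CommSemiring R] [Semiring A] [Algebra R A]

def Subalgebra.matrixFunctions (S : Subalgebra R (X → A)) (m : Type*) [Fintype m] [DecidableEq m] :
    Subalgebra R (X → Matrix m m A) where
  carrier := {F | ∀ i j, (fun x => F x i j) ∈ S}
  mul_mem' {F G} hF hG i j := by
    have : (fun x => (F * G) x i j) = ∑ l, (fun x => F x i l) * fun x => G x l j := by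
      ext x; simp [Matrix.mul_apply]
    exact this ▸ sum_mem fun l _ => mul_mem (hF i l) (hG l j)
  add_mem' hF hG i j := add_mem (hF i j) (hG i j)
  algebraMap_mem' r i j := by
    by_cases hij : i = j
    · simp only [Pi.algebraMap_apply, Matrix.algebraMap_matrix_apply, hij, if_true]
      exact S.algebraMap_mem r
    · simp only [Pi.algebraMap_apply, Matrix.algebraMap_matrix_apply, hij, if_false]
      exact S.zero_mem

theorem Subalgebra.det_mem_of_mem_matrixFunctions {R X A m : Type*} [CommRing R] [CommRing A]
    [Algebra R A] [Fintype m] [DecidableEq m] {S : Subalgebra R (X → A)} {F : X → Matrix m m A}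
    (hF : F ∈ S.matrixFunctions m) : (fun x => (F x).det) ∈ S := by
  have : (fun x => (F x).det) =
      ∑ τ : Equiv.Perm m, (Equiv.Perm.sign τ : ℤ) • ∏ i, fun x => F x (τ i) i := by
    ext x; simp [Matrix.det_apply, Units.smul_def]
  exact this ▸ sum_mem fun τ _ => zsmul_mem (prod_mem fun i _ => hF (τ i) i) _

end MatrixFunctions

theorem StarAlgHom.surjective_iff_adjoin_range_comp_eq_top {R A B ι : Type*} [CommSemiring R]
    [StarRing R] [Semiring A] [Algebra R A] [StarRing A] [StarModule R A] [Semiring B]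
    [Algebra R B] [StarRing B] [StarModule R B] (φ : A →⋆ₐ[R] B) {s : ι → A}
    (hs : StarAlgebra.adjoin R (Set.range s) = ⊤) :
    Function.Surjective φ ↔ StarAlgebra.adjoin R (Set.range (φ ∘ s)) = ⊤ := by
  rw [Set.range_comp, ← StarAlgHom.map_adjoin, hs, ← StarAlgHom.range_eq_map_top,
    ← StarSubalgebra.toSubalgebra_eq_top]
  exact (AlgHom.range_eq_top φ.toAlgHom).symm

theorem Algebra.adjoin_eq_top_iff_span_pow_finrank {K B : Type*} [Field K] [Ring B] [Algebra K B]
    [FiniteDimensional K B] {s : Set B} (h1 : (1 : B) ∈ s) :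
    Algebra.adjoin K s = ⊤ ↔ span K (s ^ finrank K B) = ⊤ := by
  rw [← Algebra.adjoin_span, ← Algebra.toSubmodule_eq_top,
    adjoin_toSubmodule_eq_pow_finrank (subset_span h1), span_pow]

namespace MatrixTuple

variable {n k : ℕ}

def reImCoords (T : Fin n → Matrix (Fin k) (Fin k) ℂ) : Fin n × Fin k × Fin k × Fin 2 → ℝ :=
  fun x => if x.2.2.2 = 0 then (T x.1 x.2.1 x.2.2.1).re else (T x.1 x.2.1 x.2.2.1).im

/-- `none` stands for the identity, so that words of a fixed length cover all shorter words. -/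
def letter (T : Fin n → Matrix (Fin k) (Fin k) ℂ) :
    Option (Fin n ⊕ Fin n) → Matrix (Fin k) (Fin k) ℂ
  | none => 1
  | some (.inl j) => T j
  | some (.inr j) => star (T j)

abbrev Word (n k : ℕ) := Fin (finrank ℂ (Matrix (Fin k) (Fin k) ℂ)) → Option (Fin n ⊕ Fin n)

noncomputable def word (T : Fin n → Matrix (Fin k) (Fin k) ℂ) (w : Word n k) :
    Matrix (Fin k) (Fin k) ℂ :=
  (List.ofFn (letter T ∘ w)).prod

noncomputable def wordMatrix (T : Fin n → Matrix (Fin k) (Fin k) ℂ) :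
    Matrix (Fin k × Fin k) (Word n k) ℂ :=
  (Matrix.stdBasis ℂ (Fin k) (Fin k)).toMatrix (word T)

noncomputable def gramDet (T : Fin n → Matrix (Fin k) (Fin k) ℂ) : ℂ :=
  (wordMatrix T * (wordMatrix T)ᴴ).det

theorem range_letter (T : Fin n → Matrix (Fin k) (Fin k) ℂ) :
    Set.range (letter T) = insert 1 (Set.range T ∪ star (Set.range T)) := by
  ext x
  simp [letter, Option.exists, Sum.exists, Set.mem_star, eq_star_iff_eq_star, eq_comm]

theorem starAlgebra_adjoin_eq_top_iff_span_word (T : Fin n → Matrix (Fin k) (Fin k) ℂ) :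
    StarAlgebra.adjoin ℂ (Set.range T) = ⊤ ↔ span ℂ (Set.range (word T)) = ⊤ := by
  have h1 : (1 : Matrix (Fin k) (Fin k) ℂ) ∈ Set.range (letter T) := ⟨none, rfl⟩
  rw [← StarSubalgebra.toSubalgebra_eq_top, StarAlgebra.adjoin_toSubalgebra,
    ← Algebra.adjoin_insert_one, ← range_letter, Algebra.adjoin_eq_top_iff_span_pow_finrank h1,
    Set.range_pow]
  rfl

theorem starAlgebra_adjoin_eq_top_iff_gramDet_ne_zero (T : Fin n → Matrix (Fin k) (Fin k) ℂ) :
    StarAlgebra.adjoin ℂ (Set.range T) = ⊤ ↔ gramDet T ≠ 0 := by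
  open ComplexOrder in
  rw [starAlgebra_adjoin_eq_top_iff_span_word,
    (Matrix.stdBasis ℂ (Fin k) (Fin k)).span_range_eq_top_iff_det_ne_zero]
  rfl

theorem continuous_reImCoords : Continuous (reImCoords (n := n) (k := k)) :=
  continuous_pi fun x => by unfold reImCoords; split_ifs <;> fun_prop

theorem apply_mem_matrixFunctions (j : Fin n) :
    (fun T => T j) ∈ (realPolyFunctions (reImCoords (k := k))).matrixFunctions (Fin k) :=
  fun a b => ⟨X (j, a, b, 0), X (j, a, b, 1), fun T => by simp [reImCoords, re_add_im]⟩

theorem letter_mem_matrixFunctions (l : Option (Fin n ⊕ Fin n)) :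
    (fun T => letter T l) ∈ (realPolyFunctions (reImCoords (k := k))).matrixFunctions (Fin k) := by
  rcases l with _ | j | j
  · exact one_mem _
  · exact apply_mem_matrixFunctions j
  · exact fun a b => star_mem_realPolyFunctions (apply_mem_matrixFunctions j b a)

theorem word_mem_matrixFunctions (w : Word n k) :
    (fun T => word T w) ∈ (realPolyFunctions reImCoords).matrixFunctions (Fin k) := by
  have : (fun T => word T w) = (List.ofFn fun i T => letter T (w i)).prod := by
    ext1 T
    simp [word, Pi.list_prod_apply, List.map_ofFn, Function.comp_def]
  exact this ▸ list_prod_mem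
    (by simpa [List.mem_ofFn] using fun i => letter_mem_matrixFunctions (w i))

theorem gramDet_mem_realPolyFunctions :
    gramDet ∈ realPolyFunctions (reImCoords (n := n) (k := k)) := by
  refine Subalgebra.det_mem_of_mem_matrixFunctions fun p q => ?_
  have hB : ∀ (p : Fin k × Fin k) (w : Word n k),
      (fun T => wordMatrix T p w) ∈ realPolyFunctions reImCoords := fun p w => by
    simpa [wordMatrix, Basis.toMatrix_apply, Matrix.stdBasis] using
      word_mem_matrixFunctions w p.1 p.2
  have : (fun T : Fin n → Matrix (Fin k) (Fin k) ℂ => (wordMatrix T * (wordMatrix T)ᴴ) p q) =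
      ∑ w, (fun T => wordMatrix T p w) * star (fun T => wordMatrix T q w) := by
    ext T; simp [Matrix.mul_apply]
  exact this ▸ sum_mem fun w _ => mul_mem (hB p w) (star_mem_realPolyFunctions (hB q w))

end MatrixTuple

open MatrixTuple

/-- Let `A` be a finitely generated unital *-algebra over `ℂ` with
ordered generating set `(s₁, …, s_n)`, and fix `k`. Identify the set `V_k` of unital
*-homomorphisms `A → M_k(ℂ)` with a subset of `M_k(ℂ)ⁿ` (a homomorphism corresponds to the
tuple of images of the generators). Then the subset `V_k^sur ⊆ V_k` of surjective
*-homomorphisms is Zariski-open in `V_k` (as a real algebraic variety): it is the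
non-vanishing locus in `V_k` of finitely many real polynomials in the real and imaginary
parts of the matrix entries. In particular it is open in `V_k` for the Euclidean topology. -/
theorem surjective_homs_zariski_open
    {A : Type*} [Ring A] [StarRing A] [Algebra ℂ A] [StarModule ℂ A]
    {n : ℕ} (s : Fin n → A) (hgen : StarAlgebra.adjoin ℂ (Set.range s) = ⊤)
    (k : ℕ) :
    ∀ Vk Vsur : Set (Fin n → Matrix (Fin k) (Fin k) ℂ),
      Vk = {T | ∃ φ : A →⋆ₐ[ℂ] Matrix (Fin k) (Fin k) ℂ, ∀ i, φ (s i) = T i} →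
      Vsur = {T | ∃ φ : A →⋆ₐ[ℂ] Matrix (Fin k) (Fin k) ℂ,
          Function.Surjective φ ∧ ∀ i, φ (s i) = T i} →
      (∃ Pset : Finset (MvPolynomial (Fin n × Fin k × Fin k × Fin 2) ℝ),
          Vsur = {T ∈ Vk | ∃ p ∈ Pset,
            MvPolynomial.eval
              (fun x : Fin n × Fin k × Fin k × Fin 2 =>
                if x.2.2.2 = 0 then (T x.1 x.2.1 x.2.2.1).re else (T x.1 x.2.1 x.2.2.1).im)
              p ≠ 0}) ∧
      IsOpen {T : Vk | (T : Fin n → Matrix (Fin k) (Fin k) ℂ) ∈ Vsur} := by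
  intro Vk Vsur hVk hVsur
  have hsurj : ∀ (T : Fin n → Matrix (Fin k) (Fin k) ℂ) (φ : A →⋆ₐ[ℂ] Matrix (Fin k) (Fin k) ℂ),
      (∀ i, φ (s i) = T i) → (Function.Surjective φ ↔ gramDet T ≠ 0) := fun T φ hφ => by
    rw [φ.surjective_iff_adjoin_range_comp_eq_top hgen,
      ← starAlgebra_adjoin_eq_top_iff_gramDet_ne_zero, show ⇑φ ∘ s = T from funext hφ]
  have hsur : ∀ T, T ∈ Vsur ↔ T ∈ Vk ∧ gramDet T ≠ 0 := fun T => by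
    subst hVk hVsur
    exact ⟨fun ⟨φ, hs, hφ⟩ => ⟨⟨φ, hφ⟩, (hsurj T φ hφ).1 hs⟩,
      fun ⟨⟨φ, hφ⟩, hd⟩ => ⟨φ, (hsurj T φ hφ).2 hd, hφ⟩⟩
  obtain ⟨P, hP⟩ := exists_finset_ne_zero_iff_of_mem_realPolyFunctions gramDet_mem_realPolyFunctions
  refine ⟨⟨P, Set.ext fun T => (hsur T).trans (and_congr_right' (hP T))⟩, ?_⟩
  have hopen : IsOpen {T : Fin n → Matrix (Fin k) (Fin k) ℂ | gramDet T ≠ 0} := isOpen_ne_fun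
    (continuous_of_mem_realPolyFunctions continuous_reImCoords gramDet_mem_realPolyFunctions)
    continuous_const
  convert hopen.preimage continuous_subtype_val using 1
  ext T
  exact (hsur T).trans (and_iff_right T.2)
end

section
/- Let G be a group with property (ET): there exist ε > 0 and a finite set F ⊆ G such that every character χ ≠ 1_G satisfies max_{g∈F} (1 − Re χ(g)) ≥ ε. Let φ_n be traces on G with barycenter decompositions μ_n (Borel probability measures on Ch(G) whose barycenter is φ_n). If φ_n → 1_G pointwise, then μ_n({1_G}) → 1. -/
open scoped ComplexOrder

/-- A trace on a group `G`: a positive-definite, conjugation-invariant function `G → ℂ`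
normalized by `φ(1) = 1`. -/
def IsGroupTrace {G : Type*} [Group G] (φ : G → ℂ) : Prop :=
  φ 1 = 1 ∧ (∀ g h : G, φ (g * h * g⁻¹) = φ h) ∧
  ∀ (m : ℕ) (v : Fin m → G) (c : Fin m → ℂ),
    0 ≤ ∑ i : Fin m, ∑ j : Fin m, starRingEnd ℂ (c i) * c j * φ ((v i)⁻¹ * v j)

/-- The space of traces on `G`, as a subset of `G → ℂ` (pointwise convergence topology). -/
def groupTraces (G : Type*) [Group G] : Set (G → ℂ) := {φ | IsGroupTrace φ}

/-- The characters of `G`: the extreme points of the space of traces. -/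
def groupChars (G : Type*) [Group G] : Set (G → ℂ) :=
  (groupTraces G).extremePoints ℝ

lemma trace_pos2 {G : Type*} [Group G] {φ : G → ℂ} (h : IsGroupTrace φ) (g : G) (c : ℂ) :
    0 ≤ 1 + c * φ g + starRingEnd ℂ c * φ g⁻¹ + starRingEnd ℂ c * c := by
  have := h.2.2 2 ![1, g] ![1, c]
  simpa [Fin.sum_univ_two, h.1, mul_comm, mul_assoc, add_assoc] using this

lemma trace_herm {G : Type*} [Group G] {φ : G → ℂ} (h : IsGroupTrace φ) (g : G) :
    φ g⁻¹ = starRingEnd ℂ (φ g) := by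
  have h1 := trace_pos2 h g 1
  have hI := trace_pos2 h g Complex.I
  rw [Complex.le_def] at h1 hI
  have e1 := h1.2
  have e2 := hI.2
  simp [Complex.ext_iff, Complex.mul_im, Complex.mul_re] at e1 e2 ⊢
  constructor <;> nlinarith [e1, e2]

lemma trace_norm_le {G : Type*} [Group G] {φ : G → ℂ} (h : IsGroupTrace φ) (g : G) :
    ‖φ g‖ ≤ 1 := by
  have hp := trace_pos2 h g (-(starRingEnd ℂ (φ g)))
  rw [trace_herm h g, Complex.le_def] at hp
  have h1 := hp.1
  simp [Complex.mul_re] at h1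
  have h2 : Complex.normSq (φ g) ≤ 1 := by
    simp only [Complex.normSq_apply]; nlinarith
  rw [Complex.norm_def]
  exact Real.sqrt_le_one.mpr h2

/-- Let `G` have property (ET) witnessed by `ε > 0` and a finite set
`F ⊆ G`: every character `χ ≠ 1_G` satisfies `max_{g ∈ F} (1 − Re χ(g)) ≥ ε`. Let `φ_n` be
traces on `G` with barycenter decompositions `μ_n` (Borel probability measures carried by
`Ch(G)` whose barycenter is `φ_n`). If `φ_n → 1_G` pointwise, then `μ_n({1_G}) → 1`. -/
theorem measure_of_trivial_char_tendsto_one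
    {G : Type*} [Group G] [Countable G]
    [MeasurableSpace (G → ℂ)] [BorelSpace (G → ℂ)]
    {ε : ℝ} (hε : 0 < ε) (F : Finset G)
    (hET : ∀ χ ∈ groupChars G, χ ≠ (fun _ => (1 : ℂ)) → ∃ g ∈ F, ε ≤ 1 - (χ g).re)
    (φ : ℕ → G → ℂ) (hφ : ∀ n, φ n ∈ groupTraces G)
    (μ : ℕ → MeasureTheory.Measure (G → ℂ))
    (hprob : ∀ n, MeasureTheory.IsProbabilityMeasure (μ n))
    (hsupp : ∀ n, μ n (groupChars G)ᶜ = 0)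
    (hbary : ∀ n (g : G), φ n g = ∫ χ : G → ℂ, χ g ∂(μ n))
    (hconv : ∀ g : G, Filter.Tendsto (fun n => φ n g) Filter.atTop (nhds 1)) :
    Filter.Tendsto (fun n => (μ n {fun _ => (1 : ℂ)}).toReal) Filter.atTop (nhds 1) := by
  have _ := fun n => hprob n
  set one : G → ℂ := fun _ => 1 with hone
  have hmeas1 : MeasurableSet {one} := isClosed_singleton.measurableSet
  have hae : ∀ n, ∀ᵐ χ ∂μ n, χ ∈ groupChars G := fun n =>
    MeasureTheory.mem_ae_iff.mpr (hsupp n)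
  have hm : ∀ g : G, Measurable fun χ : G → ℂ => χ g := fun g =>
    (continuous_apply g).measurable
  have hint : ∀ n g, MeasureTheory.Integrable (fun χ : G → ℂ => χ g) (μ n) := by
    intro n g
    haveI := hprob n
    refine MeasureTheory.Integrable.mono' (MeasureTheory.integrable_const 1)
      (hm g).aestronglyMeasurable ?_
    filter_upwards [hae n] with χ hχ
    exact le_trans (trace_norm_le (extremePoints_subset (𝕜 := ℝ) (A := groupTraces G) hχ) g) (by norm_num)
  have hre : ∀ n g, ∫ χ : G → ℂ, (χ g).re ∂μ n = (φ n g).re := by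
    intro n g
    have := integral_re (hint n g)
    rw [hbary n g]
    simpa using this
  have hintre : ∀ n g, MeasureTheory.Integrable (fun χ : G → ℂ => (χ g).re) (μ n) := by
    intro n g
    simpa using (hint n g).re
  have key : ∀ n, ε * (μ n ({one}ᶜ)).toReal ≤ ∑ g ∈ F, (1 - (φ n g).re) := by
    intro n
    haveI := hprob n
    have hfint : MeasureTheory.Integrable
        (fun χ : G → ℂ => ∑ g ∈ F, (1 - (χ g).re)) (μ n) := by
      apply MeasureTheory.integrable_finset_sum
      intro g _
      exact (MeasureTheory.integrable_const 1).sub (hintre n g)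
    have hind : MeasureTheory.Integrable ((({one} : Set (G → ℂ))ᶜ).indicator fun _ => ε) (μ n) :=
      (MeasureTheory.integrable_const ε).indicator hmeas1.compl
    have hmono : ∀ᵐ χ ∂μ n, (({one} : Set (G → ℂ))ᶜ).indicator (fun _ => ε) χ ≤
        ∑ g ∈ F, (1 - (χ g).re) := by
      filter_upwards [hae n] with χ hχ
      have htr : IsGroupTrace χ := extremePoints_subset (𝕜 := ℝ) (A := groupTraces G) hχ
      have hterm : ∀ g ∈ F, 0 ≤ 1 - (χ g).re := by
        intro g _
        have h1 := trace_norm_le htr g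
        have h2 := Complex.re_le_norm (χ g)
        linarith
      by_cases hχ1 : χ = one
      · rw [Set.indicator_of_notMem (by simp [hχ1])]
        exact Finset.sum_nonneg hterm
      · rw [Set.indicator_of_mem (by simpa using hχ1)]
        obtain ⟨g0, hg0F, hg0⟩ := hET χ hχ hχ1
        exact le_trans hg0 (Finset.single_le_sum hterm hg0F)
    have hmono2 := MeasureTheory.integral_mono_ae hind hfint hmono
    rw [MeasureTheory.integral_indicator_const _ hmeas1.compl] at hmono2
    have hIeq : ∫ a : G → ℂ, (∑ g ∈ F, (1 - (a g).re)) ∂μ n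
        = ∑ g ∈ F, ∫ a : G → ℂ, (1 - (a g).re) ∂μ n :=
      MeasureTheory.integral_finset_sum F (fun g _ =>
        (MeasureTheory.integrable_const 1).sub (hintre n g))
    calc ε * (μ n {one}ᶜ).toReal = (μ n {one}ᶜ).toReal • ε := by
          rw [smul_eq_mul, mul_comm]
      _ ≤ _ := hmono2
      _ = ∑ g ∈ F, ∫ a : G → ℂ, (1 - (a g).re) ∂μ n := hIeq
      _ = ∑ g ∈ F, (1 - (φ n g).re) := by
          refine Finset.sum_congr rfl fun g _ => ?_
          rw [MeasureTheory.integral_sub (MeasureTheory.integrable_const 1) (hintre n g),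
            hre n g]
          simp
  have hsum : Filter.Tendsto (fun n => ∑ g ∈ F, (1 - (φ n g).re)) Filter.atTop
      (nhds 0) := by
    have : Filter.Tendsto (fun n => ∑ g ∈ F, (1 - (φ n g).re)) Filter.atTop
        (nhds (∑ g ∈ F, (0 : ℝ))) := by
      apply tendsto_finset_sum
      intro g _
      have : Filter.Tendsto (fun n => (φ n g).re) Filter.atTop (nhds 1) := by
        have := (Complex.continuous_re.tendsto 1).comp (hconv g)
        simpa [Function.comp_def] using this
      simpa using (tendsto_const_nhds (x := (1:ℝ))).sub this
    simpa using this
  have hcompl : Filter.Tendsto (fun n => (μ n ({one}ᶜ)).toReal) Filter.atTop (nhds 0) := by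
    apply squeeze_zero (fun n => ENNReal.toReal_nonneg)
      (fun n => ?_) (g := fun n => ε⁻¹ * ∑ g ∈ F, (1 - (φ n g).re))
    · have h := hsum.const_mul ε⁻¹
      simpa using h
    · have h2 := (le_div_iff₀' hε).mpr (key n)
      simpa [div_eq_inv_mul] using h2
  have hfin : ∀ n, (μ n {one}).toReal = 1 - (μ n ({one}ᶜ)).toReal := by
    intro n
    haveI := hprob n
    have h := MeasureTheory.prob_compl_eq_one_sub (μ := μ n) hmeas1
    rw [h, ENNReal.toReal_sub_of_le MeasureTheory.prob_le_one ENNReal.one_ne_top]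
    simp
  have : Filter.Tendsto (fun n => 1 - (μ n ({one}ᶜ)).toReal) Filter.atTop (nhds (1 - 0)) :=
    (tendsto_const_nhds).sub hcompl
  simp only [sub_zero] at this
  exact this.congr fun n => (hfin n).symm
end
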